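/- arXiv:1901.03509 — 2 statements merged into one kernel-verified Lean document; each statement's English description precedes it below -/
import Mathlib

section
/- Let H be a real inner product space, L : H →ₗ[ℝ] H a symmetric linear map, and φ ∈ H, Λ ∈ ℝ with L φ = Λ • φ. Let f ∈ H with ⟪f, φ⟫ > 0 and let u : ℝ → H be a family such that L (u σ) = σ • (u σ) + f for every σ ≠ Λ. Then ⟪u σ, φ⟫ → +∞ as σ → Λ from the left (i.e. Tendsto (fun σ => ⟪u σ, φ⟫) (𝓝[<] Λ) atTop) and ⟪u σ, φ⟫ → -∞ as σ → Λ from the right (i.e. Tendsto (fun σ => ⟪u σ, φ⟫) (𝓝[>] Λ) atBot). -/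
open RealInnerProductSpace Filter Topology

section

variable {𝕜 : Type*} [Field 𝕜] [LinearOrder 𝕜] [IsStrictOrderedRing 𝕜] [TopologicalSpace 𝕜]
  [OrderTopology 𝕜]

theorem tendsto_inv_sub_nhdsLT (a : 𝕜) : Tendsto (fun x => (a - x)⁻¹) (𝓝[<] a) atTop := by
  refine Tendsto.inv_tendsto_nhdsGT_zero <|
    tendsto_nhdsWithin_of_tendsto_nhds_of_eventually_within _ ?_ ?_
  · simpa using ((continuous_sub_left a).tendsto a).mono_left nhdsWithin_le_nhds
  · exact eventually_nhdsWithin_of_forall fun x hx => sub_pos.2 hx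

theorem tendsto_inv_sub_nhdsGT (a : 𝕜) : Tendsto (fun x => (a - x)⁻¹) (𝓝[>] a) atBot := by
  refine Tendsto.inv_tendsto_nhdsLT_zero <|
    tendsto_nhdsWithin_of_tendsto_nhds_of_eventually_within _ ?_ ?_
  · simpa using ((continuous_sub_left a).tendsto a).mono_left nhdsWithin_le_nhds
  · exact eventually_nhdsWithin_of_forall fun x hx => sub_neg.2 hx

end

theorem LinearMap.IsSymmetric.sub_mul_inner_eq_of_apply_eq_smul_add
    {H : Type*} [NormedAddCommGroup H] [InnerProductSpace ℝ H] {L : H →ₗ[ℝ] H}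
    (hL : L.IsSymmetric) {φ : H} {Λ : ℝ} (hφ : L φ = Λ • φ) {u f : H} {σ : ℝ}
    (hu : L u = σ • u + f) : (Λ - σ) * ⟪u, φ⟫ = ⟪f, φ⟫ := by
  have h := hL u φ
  rw [hu, hφ, inner_add_left, real_inner_smul_left, real_inner_smul_right] at h
  linarith

theorem blow_up_of_component
    {H : Type*} [NormedAddCommGroup H] [InnerProductSpace ℝ H]
    (L : H →ₗ[ℝ] H) (hsym : ∀ x y : H, ⟪L x, y⟫ = ⟪x, L y⟫)
    (φ : H) (Λ : ℝ) (hφ : L φ = Λ • φ)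
    (f : H) (hf : ⟪f, φ⟫ > 0)
    (u : ℝ → H) (hu : ∀ σ : ℝ, σ ≠ Λ → L (u σ) = σ • (u σ) + f) :
    Tendsto (fun σ => ⟪u σ, φ⟫) (nhdsWithin Λ (Set.Iio Λ)) atTop ∧
    Tendsto (fun σ => ⟪u σ, φ⟫) (nhdsWithin Λ (Set.Ioi Λ)) atBot := by
  have hcomponent : ∀ σ, σ ≠ Λ → ⟪f, φ⟫ * (Λ - σ)⁻¹ = ⟪u σ, φ⟫ := fun σ hσ => by
    rw [← LinearMap.IsSymmetric.sub_mul_inner_eq_of_apply_eq_smul_add hsym hφ (hu σ hσ),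
      mul_comm, inv_mul_cancel_left₀ (sub_ne_zero.2 hσ.symm)]
  constructor
  · exact ((tendsto_inv_sub_nhdsLT Λ).const_mul_atTop hf).congr'
      (eventually_nhdsWithin_of_forall fun σ hσ => hcomponent σ (ne_of_lt hσ))
  · exact ((tendsto_inv_sub_nhdsGT Λ).const_mul_atBot hf).congr'
      (eventually_nhdsWithin_of_forall fun σ hσ => hcomponent σ (ne_of_gt hσ))
end

section
/- Let H be a real inner product space, L : H →ₗ[ℝ] H a symmetric linear map, and φ ∈ H, Λ ∈ ℝ with L φ = Λ • φ. Let u₁, u₂, f₁, f₂ ∈ H and μ ∈ ℝ satisfy L u₁ = a•u₁ + b•u₂ + μ•u₁ + f₁ and L u₂ = c•u₁ + d•u₂ + μ•u₂ + f₂, where b ≠ 0, a ≠ d, (a-d)² + 4·b·c = 0, ξ = (a+d)/2, ν = Λ - ξ, and assume μ ≠ ν. Define ũ₁ = (-2/(a-d))•u₂, ũ₂ = ((a-d)/(2b))•u₁ + u₂, f̃₁ = (-2/(a-d))•f₂ and f̃₂ = ((a-d)/(2b))•f₁ + f₂. Then ⟪ũ₂, φ⟫ = ⟪f̃₂, φ⟫/(ν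 - μ) and ⟪ũ₁, φ⟫ = ⟪f̃₁, φ⟫/(ν - μ) + ⟪f̃₂, φ⟫/(ν - μ)²; in particular u₂ satisfies ⟪u₂, φ⟫ = ((d-a)/2)·⟪ũ₁, φ⟫. -/
/-!
When `(a - d)² + 4bc = 0` the matrix `A = !![a, b; c, d]` has the single eigenvalue `ξ = (a + d)/2`
and `A - ξ` is nilpotent; the substitution `u ↦ ũ` is the change to a Jordan basis of `A`, which
turns the system into `L ũ₂ = (ξ + μ) ũ₂ + f̃₂` and `L ũ₁ = (ξ + μ) ũ₁ + ũ₂ + f̃₁`. Pairing with the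
eigenvector `φ` and using the symmetry of `L` replaces `L` by `Λ`, so
`(ν - μ) ⟪ũ₂, φ⟫ = ⟪f̃₂, φ⟫` and `(ν - μ) ⟪ũ₁, φ⟫ = ⟪ũ₂, φ⟫ + ⟪f̃₁, φ⟫`.
-/

open RealInnerProductSpace

section JordanForm

variable {K M : Type*} [Field K] [CharZero K] [AddCommGroup M] [Module K M]
  (L : M →ₗ[K] M) {a b c d μ : K} {u₁ u₂ f₁ f₂ : M}

theorem map_eigencomponent_eq_of_double_eigenvalue
    (h₁ : L u₁ = a • u₁ + b • u₂ + μ • u₁ + f₁)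
    (h₂ : L u₂ = c • u₁ + d • u₂ + μ • u₂ + f₂)
    (hb : b ≠ 0) (hD : (a - d) ^ 2 + 4 * b * c = 0) :
    L (((a - d) / (2 * b)) • u₁ + u₂) =
      ((a + d) / 2 + μ) • (((a - d) / (2 * b)) • u₁ + u₂) +
        (((a - d) / (2 * b)) • f₁ + f₂) := by
  have hcoeff₂ : (a - d) / (2 * b) * b = (a - d) / 2 := by field_simp
  have hcoeff₁ : (a - d) / (2 * b) * ((a - d) / 2) + c = 0 := by
    field_simp
    linear_combination hD
  rw [map_add, map_smul, h₁, h₂]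
  linear_combination (norm := module) hcoeff₂ • u₂ + hcoeff₁ • u₁

theorem map_generalized_component_eq_of_double_eigenvalue
    (h₂ : L u₂ = c • u₁ + d • u₂ + μ • u₂ + f₂)
    (hb : b ≠ 0) (had : a ≠ d) (hD : (a - d) ^ 2 + 4 * b * c = 0) :
    L ((-2 / (a - d)) • u₂) =
      ((a + d) / 2 + μ) • ((-2 / (a - d)) • u₂) +
        ((((a - d) / (2 * b)) • u₁ + u₂) + (-2 / (a - d)) • f₂) := by
  have had' : a - d ≠ 0 := sub_ne_zero.mpr had
  have hcoeff₂ : -2 / (a - d) * d = -2 / (a - d) * ((a + d) / 2) + 1 := by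
    field_simp
    ring
  have hcoeff₁ : -2 / (a - d) * c = (a - d) / (2 * b) := by
    field_simp
    linear_combination -hD
  rw [map_smul, h₂]
  linear_combination (norm := module) hcoeff₂ • u₂ + hcoeff₁ • u₁

end JordanForm

section Pairing

variable {H : Type*} [NormedAddCommGroup H] [InnerProductSpace ℝ H] {L : H →ₗ[ℝ] H}
  {φ : H} {Λ : ℝ}

theorem LinearMap.IsSymmetric.inner_map_left_of_eigenvector (hL : L.IsSymmetric)
    (hφ : L φ = Λ • φ) (u : H) : ⟪L u, φ⟫ = Λ * ⟪u, φ⟫ := by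
  rw [hL, hφ, real_inner_smul_right]

theorem LinearMap.IsSymmetric.inner_eigenvector_of_map_eq (hL : L.IsSymmetric)
    (hφ : L φ = Λ • φ) {u f : H} {α : ℝ} (hu : L u = α • u + f) :
    (Λ - α) * ⟪u, φ⟫ = ⟪f, φ⟫ := by
  have h := hL.inner_map_left_of_eigenvector hφ u
  rw [hu, inner_add_left, real_inner_smul_left] at h
  linear_combination -h

end Pairing

theorem component_formula_double_eigenvalue
    {H : Type*} [NormedAddCommGroup H] [InnerProductSpace ℝ H]
    (L : H →ₗ[ℝ] H) (hsym : ∀ x y : H, ⟪L x, y⟫ = ⟪x, L y⟫)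
    (φ : H) (Λ : ℝ) (hφ : L φ = Λ • φ)
    (a b c d μ : ℝ) (u₁ u₂ f₁ f₂ : H)
    (h₁ : L u₁ = a • u₁ + b • u₂ + μ • u₁ + f₁)
    (h₂ : L u₂ = c • u₁ + d • u₂ + μ • u₂ + f₂)
    (hb : b ≠ 0) (had : a ≠ d) (hD : (a - d) ^ 2 + 4 * b * c = 0)
    (ξ ν : ℝ) (hξ : ξ = (a + d) / 2) (hν : ν = Λ - ξ) (hμ : μ ≠ ν)
    (tu₁ tu₂ tf₁ tf₂ : H)
    (htu₁ : tu₁ = (-2 / (a - d)) • u₂)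
    (htu₂ : tu₂ = ((a - d) / (2 * b)) • u₁ + u₂)
    (htf₁ : tf₁ = (-2 / (a - d)) • f₂)
    (htf₂ : tf₂ = ((a - d) / (2 * b)) • f₁ + f₂) :
    ⟪tu₂, φ⟫ = ⟪tf₂, φ⟫ / (ν - μ) ∧
    ⟪tu₁, φ⟫ = ⟪tf₁, φ⟫ / (ν - μ) + ⟪tf₂, φ⟫ / (ν - μ) ^ 2 ∧
    ⟪u₂, φ⟫ = ((d - a) / 2) * ⟪tu₁, φ⟫ := by
  have hL : L.IsSymmetric := hsym
  have hνμ : ν - μ ≠ 0 := sub_ne_zero.mpr hμ.symm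
  have hshift : Λ - ((a + d) / 2 + μ) = ν - μ := by
    rw [hν, hξ]
    ring
  have e₂ := hL.inner_eigenvector_of_map_eq hφ
    (map_eigencomponent_eq_of_double_eigenvalue L h₁ h₂ hb hD)
  have e₁ := hL.inner_eigenvector_of_map_eq hφ
    (map_generalized_component_eq_of_double_eigenvalue L h₂ hb had hD)
  rw [hshift, ← htu₂, ← htf₂] at e₂
  rw [hshift, ← htu₁, ← htu₂, ← htf₁, inner_add_left] at e₁
  refine ⟨?_, ?_, ?_⟩
  · rw [eq_div_iff hνμ, mul_comm, e₂]
  · field_simp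
    linear_combination (ν - μ) * e₁ + e₂
  · have had' : a - d ≠ 0 := sub_ne_zero.mpr had
    rw [htu₁, real_inner_smul_left]
    field_simp
    ring
end
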